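/- Let I,J ⊆ ℝ be open intervals and σ, σ̂ : I → ℝ^6 smooth with ⟨σ,σ⟩ = ⟨σ̂,σ̂⟩ = 0, ⟨σ(t),σ̂(t)⟩ ≠ 0, ⟨σ'(t),σ'(t)⟩ > 0 and ⟨σ̂'(t),σ̂'(t)⟩ > 0 for all t. Let σ₀ : I×J → ℝ^6 be smooth, nowhere zero, null, with ⟨σ₀,σ⟩ = ⟨σ₀,σ̂⟩ = ⟨σ₀,σ'⟩ = ⟨σ₀,σ̂'⟩ = 0 (so, extending σ,σ̂ constantly in θ, f := span{σ,σ₀} and f̂ := span{σ̂,σ₀} are totally isotropic and satisfy the contact condition), and assume ∂_θσ₀ ∉ f and ∂_θσ₀ ∉ f̂ at every point. Suppose f and f̂ are a Ribaucour pair with corresponding circular curvature directions: there exist a smooth function c : I×J → ℝ and smooth functions α, β, α̂, β̂ : I×J → ℝ with α and α̂ nowhere zero such that, with X := ∂_t + c∂_θ, one has ∂_X(ασ + βσ₀) ∈ f and ∂_X(α̂σ̂ + β̂σ₀) ∈ f̂ at every point (X is a common second curvature direction and the corresponding curvature spheres differ from span{σ₀}). Then for every t ∈ I, span{σ(t),σ'(t),σ̂(t)}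 = span{σ̂(t),σ̂'(t),σ(t)} and this space is 3-dimensional. -/

import Mathlib

noncomputable section
open Topology Filter

/-- `ℝ^{4,2}`: `ℝ^6` with a bilinear form of signature (4,2). -/
abbrev V6 : Type := Fin 6 → ℝ

/-- The symmetric bilinear form of signature (4,2) on `ℝ^6`. -/
def form (x y : V6) : ℝ :=
  x 0 * y 0 + x 1 * y 1 + x 2 * y 2 + x 3 * y 3 - x 4 * y 4 - x 5 * y 5

/-- Partial derivative in the first (`u`) coordinate. -/
def pu (σ : ℝ × ℝ → V6) (p : ℝ × ℝ) : V6 := fderiv ℝ σ p (1, 0)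

/-- Partial derivative in the second (`v`) coordinate. -/
def pv (σ : ℝ × ℝ → V6) (p : ℝ × ℝ) : V6 := fderiv ℝ σ p (0, 1)

/-- The contact plane `f = span{σ₁, σ₂}`. -/
def spanF (σ₁ σ₂ : ℝ × ℝ → V6) (p : ℝ × ℝ) : Submodule ℝ V6 :=
  Submodule.span ℝ {σ₁ p, σ₂ p}

/-- A local umbilic-free Legendre map in curvature line coordinates `(u,v)` on `U`,
given by lifts `σ₁, σ₂` of the two curvature sphere congruences, with curvature
directions `T₁ = ∂_u` (for `s₁ = span{σ₁}`) and `T₂ = ∂_v` (for `s₂ = span{σ₂}`). -/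
structure IsLegendre (U : Set (ℝ × ℝ)) (σ₁ σ₂ : ℝ × ℝ → V6) : Prop where
  open_U : IsOpen U
  smooth₁ : ContDiffOn ℝ (⊤ : ℕ∞) σ₁ U
  smooth₂ : ContDiffOn ℝ (⊤ : ℕ∞) σ₂ U
  indep : ∀ p ∈ U, LinearIndependent ℝ ![σ₁ p, σ₂ p]
  iso₁₁ : ∀ p ∈ U, form (σ₁ p) (σ₁ p) = 0
  iso₁₂ : ∀ p ∈ U, form (σ₁ p) (σ₂ p) = 0
  iso₂₂ : ∀ p ∈ U, form (σ₂ p) (σ₂ p) = 0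
  contact_u : ∀ p ∈ U, form (pu σ₁ p) (σ₂ p) = 0
  contact_v : ∀ p ∈ U, form (pv σ₁ p) (σ₂ p) = 0
  curv₁ : ∀ p ∈ U, pu σ₁ p ∈ spanF σ₁ σ₂ p
  curv₂ : ∀ p ∈ U, pv σ₂ p ∈ spanF σ₁ σ₂ p
  umb₁ : ∀ p ∈ U, pv σ₁ p ∉ spanF σ₁ σ₂ p
  umb₂ : ∀ p ∈ U, pu σ₂ p ∉ spanF σ₁ σ₂ p

lemma form_comm (x y : V6) : form x y = form y x := by unfold form; ring
lemma form_add_left (x y z : V6) : form (x + y) z = form x z + form y z := by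
  simp [form, Pi.add_apply]; ring
lemma form_smul_left (r : ℝ) (x y : V6) : form (r • x) y = r * form x y := by
  simp [form, Pi.smul_apply, smul_eq_mul]; ring
lemma form_sub_left (x y z : V6) : form (x - y) z = form x z - form y z := by
  simp [form, Pi.sub_apply]; ring
lemma form_zero_left (y : V6) : form 0 y = 0 := by simp [form]
lemma form_add_right (x y z : V6) : form x (y + z) = form x y + form x z := by
  simp [form, Pi.add_apply]; ring
lemma form_smul_right (r : ℝ) (x y : V6) : form x (r • y) = r * form x y := by
  simp [form, Pi.smul_apply, smul_eq_mul]; ring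

lemma HasDerivAt.form' {f g : ℝ → V6} {f' g' : V6} {t : ℝ}
    (hf : HasDerivAt f f' t) (hg : HasDerivAt g g' t) :
    HasDerivAt (fun s => form (f s) (g s)) (form f' (g t) + form (f t) g') t := by
  have hfi : ∀ i, HasDerivAt (fun s => f s i) (f' i) t := fun i =>
    (ContinuousLinearMap.proj (R := ℝ) (φ := fun _ : Fin 6 => ℝ) i).hasFDerivAt.comp_hasDerivAt t hf
  have hgi : ∀ i, HasDerivAt (fun s => g s i) (g' i) t := fun i =>
    (ContinuousLinearMap.proj (R := ℝ) (φ := fun _ : Fin 6 => ℝ) i).hasFDerivAt.comp_hasDerivAt t hg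
  have := (((((hfi 0).mul (hgi 0)).add ((hfi 1).mul (hgi 1))).add
      (((hfi 2).mul (hgi 2)))).add ((hfi 3).mul (hgi 3))).sub
      ((((hfi 4).mul (hgi 4)).add ((hfi 5).mul (hgi 5))))
  refine HasDerivAt.congr_deriv (HasDerivAt.congr_of_eventuallyEq this (Filter.Eventually.of_forall fun s => ?_)) ?_
  · simp only [Pi.add_apply, Pi.mul_apply, Pi.sub_apply]; unfold form; ring
  · unfold form; ring
lemma hasDerivAt_slice_u {F : ℝ × ℝ → V6} {p : ℝ × ℝ} (hF : DifferentiableAt ℝ F p) :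
    HasDerivAt (fun u => F (u, p.2)) (pu F p) p.1 := by
  have h1 : HasDerivAt (fun u : ℝ => (u, p.2)) ((1 : ℝ), (0 : ℝ)) p.1 :=
    (hasDerivAt_id p.1).prodMk (hasDerivAt_const p.1 p.2)
  have := hF.hasFDerivAt.comp_hasDerivAt p.1 (by simpa using h1)
  exact this

lemma hasDerivAt_slice_v {F : ℝ × ℝ → V6} {p : ℝ × ℝ} (hF : DifferentiableAt ℝ F p) :
    HasDerivAt (fun v => F (p.1, v)) (pv F p) p.2 := by
  have h1 : HasDerivAt (fun v : ℝ => (p.1, v)) ((0 : ℝ), (1 : ℝ)) p.2 :=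
    (hasDerivAt_const p.2 p.1).prodMk (hasDerivAt_id p.2)
  have := hF.hasFDerivAt.comp_hasDerivAt p.2 (by simpa using h1)
  exact this

lemma deriv_mem_of_mem {g : ℝ → V6} {M : Submodule ℝ V6} {J : Set ℝ} (hJ : IsOpen J)
    {θ₀ : ℝ} (hθ₀ : θ₀ ∈ J) (hmem : ∀ θ ∈ J, g θ ∈ M) {d : V6} (hd : HasDerivAt g d θ₀) :
    d ∈ M := by
  have hcl : IsClosed (M : Set V6) := Submodule.closed_of_finiteDimensional M
  have ht := hasDerivAt_iff_tendsto_slope.mp hd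
  refine hcl.mem_of_tendsto ht ?_
  have hev : ∀ᶠ θ in 𝓝[≠] θ₀, θ ∈ J :=
    eventually_nhdsWithin_of_eventually_nhds (hJ.eventually_mem hθ₀)
  filter_upwards [hev] with θ hθ
  have : slope g θ₀ θ = (θ - θ₀)⁻¹ • (g θ - g θ₀) := rfl
  rw [this]
  exact M.smul_mem _ (M.sub_mem (hmem θ hθ) (hmem θ₀ hθ₀))
lemma curv_extract {σ : ℝ → V6} {σ₀ : ℝ × ℝ → V6} {α β c : ℝ × ℝ → ℝ} {p : ℝ × ℝ}
    (hσd : DifferentiableAt ℝ σ p.1) (hσ₀d : DifferentiableAt ℝ σ₀ p)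
    (hαd : DifferentiableAt ℝ α p) (hβd : DifferentiableAt ℝ β p)
    (hm : pu (fun q => α q • σ q.1 + β q • σ₀ q) p
        + c p • pv (fun q => α q • σ q.1 + β q • σ₀ q) p
        ∈ Submodule.span ℝ ({σ₀ p, σ p.1} : Set V6)) :
    ∃ e₁ e₂ : ℝ, α p • deriv σ p.1 + β p • (pu σ₀ p + c p • pv σ₀ p)
        = e₁ • σ₀ p + e₂ • σ p.1 := by
  have h1 : HasFDerivAt (fun q : ℝ × ℝ => σ q.1)
      ((fderiv ℝ σ p.1).comp (ContinuousLinearMap.fst ℝ ℝ ℝ)) p :=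
    hσd.hasFDerivAt.comp p hasFDerivAt_fst
  have hG : HasFDerivAt (fun q => α q • σ q.1 + β q • σ₀ q)
      ((α p • ((fderiv ℝ σ p.1).comp (ContinuousLinearMap.fst ℝ ℝ ℝ))
          + (fderiv ℝ α p).smulRight (σ p.1))
        + (β p • fderiv ℝ σ₀ p + (fderiv ℝ β p).smulRight (σ₀ p))) p :=
    (hαd.hasFDerivAt.smul h1).add (hβd.hasFDerivAt.smul hσ₀d.hasFDerivAt)
  have hfd := hG.fderiv
  have hpu : pu (fun q => α q • σ q.1 + β q • σ₀ q) p
      = α p • deriv σ p.1 + (fderiv ℝ α p (1, 0)) • σ p.1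
        + (β p • pu σ₀ p + (fderiv ℝ β p (1, 0)) • σ₀ p) := by
    rw [pu, hfd]
    simp only [ContinuousLinearMap.add_apply, ContinuousLinearMap.smul_apply,
      ContinuousLinearMap.comp_apply, ContinuousLinearMap.smulRight_apply,
      ContinuousLinearMap.coe_fst']
    rfl
  have hpv : pv (fun q => α q • σ q.1 + β q • σ₀ q) p
      = (fderiv ℝ α p (0, 1)) • σ p.1
        + (β p • pv σ₀ p + (fderiv ℝ β p (0, 1)) • σ₀ p) := by
    rw [pv, hfd]
    simp only [ContinuousLinearMap.add_apply, ContinuousLinearMap.smul_apply,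
      ContinuousLinearMap.comp_apply, ContinuousLinearMap.smulRight_apply,
      ContinuousLinearMap.coe_fst']
    rw [map_zero, smul_zero, zero_add]
    rfl
  rw [Submodule.mem_span_pair] at hm
  obtain ⟨m, n, hmn⟩ := hm
  refine ⟨m - (fderiv ℝ β p (1, 0) + c p * fderiv ℝ β p (0, 1)),
          n - (fderiv ℝ α p (1, 0) + c p * fderiv ℝ α p (0, 1)), ?_⟩
  rw [hpu, hpv] at hmn
  have := hmn
  linear_combination (norm := module) (-1 : ℝ) • this
lemma deriv_zero_of_eqOn {F : ℝ → ℝ} {d t : ℝ} {I : Set ℝ} (hI : IsOpen I) (ht : t ∈ I)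
    (h0 : ∀ u ∈ I, F u = 0) (hd : HasDerivAt F d t) : d = 0 := by
  have hev : F =ᶠ[𝓝 t] fun _ => (0 : ℝ) := by
    filter_upwards [hI.eventually_mem ht] with u hu using h0 u hu
  have h2 : HasDerivAt (fun _ : ℝ => (0 : ℝ)) d t := hd.congr_of_eventuallyEq hev.symm
  exact h2.unique (hasDerivAt_const t 0)
theorem aux_main
    (I J : Set ℝ) (hI : IsOpen I) (hJ : IsOpen J)
    (hIne : I.Nonempty) (hJne : J.Nonempty)
    (σ τ : ℝ → V6)
    (hσsmooth : ContDiffOn ℝ (⊤ : ℕ∞) σ I) (hτsmooth : ContDiffOn ℝ (⊤ : ℕ∞) τ I)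
    (hσ0 : ∀ t ∈ I, σ t ≠ 0) (hτ0 : ∀ t ∈ I, τ t ≠ 0)
    (hσnull : ∀ t ∈ I, form (σ t) (σ t) = 0)
    (hτnull : ∀ t ∈ I, form (τ t) (τ t) = 0)
    (hστ : ∀ t ∈ I, form (σ t) (τ t) ≠ 0)
    (hσreg : ∀ t ∈ I, 0 < form (deriv σ t) (deriv σ t))
    (hτreg : ∀ t ∈ I, 0 < form (deriv τ t) (deriv τ t))
    (σ₀ : ℝ × ℝ → V6)
    (hσ₀smooth : ContDiffOn ℝ (⊤ : ℕ∞) σ₀ (I ×ˢ J))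
    (hσ₀0 : ∀ p ∈ I ×ˢ J, σ₀ p ≠ 0)
    (hσ₀perp : ∀ p ∈ I ×ˢ J,
      form (σ₀ p) (σ p.1) = 0 ∧ form (σ₀ p) (τ p.1) = 0 ∧
      form (σ₀ p) (deriv σ p.1) = 0 ∧ form (σ₀ p) (deriv τ p.1) = 0)
    (hσ₀reg : ∀ p ∈ I ×ˢ J,
      pv σ₀ p ∉ Submodule.span ℝ ({σ₀ p, σ p.1} : Set V6))
    (c α β α' β' : ℝ × ℝ → ℝ)
    (hα : ContDiffOn ℝ (⊤ : ℕ∞) α (I ×ˢ J)) (hβ : ContDiffOn ℝ (⊤ : ℕ∞) β (I ×ˢ J))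
    (hα' : ContDiffOn ℝ (⊤ : ℕ∞) α' (I ×ˢ J)) (hβ' : ContDiffOn ℝ (⊤ : ℕ∞) β' (I ×ˢ J))
    (hα0 : ∀ p ∈ I ×ˢ J, α p ≠ 0) (hα'0 : ∀ p ∈ I ×ˢ J, α' p ≠ 0)
    (hcurv : ∀ p ∈ I ×ˢ J,
      pu (fun q => α q • σ q.1 + β q • σ₀ q) p
          + c p • pv (fun q => α q • σ q.1 + β q • σ₀ q) p
        ∈ Submodule.span ℝ ({σ₀ p, σ p.1} : Set V6))
    (hcurv' : ∀ p ∈ I ×ˢ J,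
      pu (fun q => α' q • τ q.1 + β' q • σ₀ q) p
          + c p • pv (fun q => α' q • τ q.1 + β' q • σ₀ q) p
        ∈ Submodule.span ℝ ({σ₀ p, τ p.1} : Set V6)) :
    ∀ t ∈ I,
      Submodule.span ℝ ({σ t, deriv σ t, τ t} : Set V6)
          = Submodule.span ℝ ({τ t, deriv τ t, σ t} : Set V6) ∧
      Module.finrank ℝ
          (Submodule.span ℝ ({σ t, deriv σ t, τ t} : Set V6)) = 3 := by
  intro t ht
  have hσd : DifferentiableAt ℝ σ t := (hσsmooth.contDiffAt (hI.mem_nhds ht)).differentiableAt (by simp)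
  have hτd : DifferentiableAt ℝ τ t := (hτsmooth.contDiffAt (hI.mem_nhds ht)).differentiableAt (by simp)
  have hss' : form (σ t) (deriv σ t) = 0 := by
    have hd := hσd.hasDerivAt.form' hσd.hasDerivAt
    have h0 := deriv_zero_of_eqOn hI ht hσnull hd
    have hc := form_comm (deriv σ t) (σ t)
    linarith
  have hww' : form (τ t) (deriv τ t) = 0 := by
    have hd := hτd.hasDerivAt.form' hτd.hasDerivAt
    have h0 := deriv_zero_of_eqOn hI ht hτnull hd
    have hc := form_comm (deriv τ t) (τ t)
    linarith
  have hg : form (σ t) (τ t) ≠ 0 := hστ t ht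
  have hh : 0 < form (deriv σ t) (deriv σ t) := hσreg t ht
  have hk : 0 < form (deriv τ t) (deriv τ t) := hτreg t ht
  have hs0 : σ t ≠ 0 := hσ0 t ht
  have hs's : form (deriv σ t) (σ t) = 0 := by rw [form_comm]; exact hss'
  have hw'w : form (deriv τ t) (τ t) = 0 := by rw [form_comm]; exact hww'
  have hws : form (τ t) (σ t) = form (σ t) (τ t) := form_comm _ _
  have hws' : form (τ t) (deriv σ t) = form (deriv σ t) (τ t) := form_comm _ _
  -- opaque scalar abbreviations
  obtain ⟨G, hGdef⟩ : ∃ x : ℝ, form (σ t) (τ t) = x := ⟨_, rfl⟩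
  obtain ⟨P, hPdef⟩ : ∃ x : ℝ, form (deriv σ t) (τ t) = x := ⟨_, rfl⟩
  obtain ⟨Q, hQdef⟩ : ∃ x : ℝ, form (deriv τ t) (σ t) = x := ⟨_, rfl⟩
  obtain ⟨R, hRdef⟩ : ∃ x : ℝ, form (deriv τ t) (deriv σ t) = x := ⟨_, rfl⟩
  obtain ⟨H, hHdef⟩ : ∃ x : ℝ, form (deriv σ t) (deriv σ t) = x := ⟨_, rfl⟩
  have hgG : G ≠ 0 := hGdef ▸ hg
  have hhH : 0 < H := hHdef ▸ hh
  obtain ⟨v₀, hv₀def⟩ : ∃ x : V6,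
      ((R * G - Q * P) / (G * H)) • deriv σ t - deriv τ t
        - (((R * G - Q * P) / (G * H)) * P / G) • σ t + (Q / G) • τ t = x := ⟨_, rfl⟩
  have claim : ∀ θ ∈ J,
      (deriv σ t ∈ Submodule.span ℝ ({τ t, deriv τ t, σ t} : Set V6) ∧
        deriv τ t ∈ Submodule.span ℝ ({σ t, deriv σ t, τ t} : Set V6)) ∨
      σ₀ (t, θ) ∈ Submodule.span ℝ ({v₀} : Set V6) := by
    intro θ hθ
    have hp : (t, θ) ∈ I ×ˢ J := ⟨ht, hθ⟩
    have hσ₀d : DifferentiableAt ℝ σ₀ (t, θ) :=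
      (hσ₀smooth.contDiffAt ((hI.prod hJ).mem_nhds hp)).differentiableAt (by simp)
    have hαd : DifferentiableAt ℝ α (t, θ) :=
      (hα.contDiffAt ((hI.prod hJ).mem_nhds hp)).differentiableAt (by simp)
    have hβd : DifferentiableAt ℝ β (t, θ) :=
      (hβ.contDiffAt ((hI.prod hJ).mem_nhds hp)).differentiableAt (by simp)
    have hα'd : DifferentiableAt ℝ α' (t, θ) :=
      (hα'.contDiffAt ((hI.prod hJ).mem_nhds hp)).differentiableAt (by simp)
    have hβ'd : DifferentiableAt ℝ β' (t, θ) :=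
      (hβ'.contDiffAt ((hI.prod hJ).mem_nhds hp)).differentiableAt (by simp)
    obtain ⟨e₁, e₂, E1⟩ := curv_extract hσd hσ₀d hαd hβd (hcurv (t, θ) hp)
    obtain ⟨f₁, f₂, E2⟩ := curv_extract hτd hσ₀d hα'd hβ'd (hcurv' (t, θ) hp)
    obtain ⟨hzs, hzw, hzs', hzw'⟩ := hσ₀perp (t, θ) hp
    simp only [Prod.fst] at E1 E2 hzs hzw hzs' hzw'
    have hβ0 : β (t, θ) ≠ 0 := by
      intro h0
      have hx := congrArg (fun x => form x (deriv σ t)) E1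
      simp only [form_add_left, form_smul_left] at hx
      rw [h0, hzs', hss'] at hx
      have hx2 : α (t, θ) * form (deriv σ t) (deriv σ t) = 0 := by linarith
      exact absurd ((mul_eq_zero.mp hx2).resolve_right hh.ne') (hα0 _ hp)
    have hβ'0 : β' (t, θ) ≠ 0 := by
      intro h0
      have hx := congrArg (fun x => form x (deriv τ t)) E2
      simp only [form_add_left, form_smul_left] at hx
      rw [h0, hzw', hww'] at hx
      have hx2 : α' (t, θ) * form (deriv τ t) (deriv τ t) = 0 := by linarith
      exact absurd ((mul_eq_zero.mp hx2).resolve_right hk.ne') (hα'0 _ hp)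
    have hkey : (β' (t, θ) * α (t, θ)) • deriv σ t - (β (t, θ) * α' (t, θ)) • deriv τ t
        = (β' (t, θ) * e₁ - β (t, θ) * f₁) • σ₀ (t, θ)
          + (β' (t, θ) * e₂) • σ t - (β (t, θ) * f₂) • τ t := by
      linear_combination (norm := module) (β' (t, θ)) • E1 - (β (t, θ)) • E2
    by_cases hκ : β' (t, θ) * e₁ - β (t, θ) * f₁ = 0
    · left
      rw [hκ, zero_smul, zero_add] at hkey
      constructor
      · rw [← Submodule.smul_mem_iff _ (mul_ne_zero hβ'0 (hα0 _ hp))]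
        rw [show (β' (t, θ) * α (t, θ)) • deriv σ t
            = (β (t, θ) * α' (t, θ)) • deriv τ t + ((β' (t, θ) * e₂) • σ t
              - (β (t, θ) * f₂) • τ t) from by
          linear_combination (norm := module) hkey]
        refine Submodule.add_mem _ ?_ (Submodule.sub_mem _ ?_ ?_) <;>
          exact Submodule.smul_mem _ _ (Submodule.subset_span (by simp))
      · rw [← Submodule.smul_mem_iff _ (mul_ne_zero hβ0 (hα'0 _ hp))]
        rw [show (β (t, θ) * α' (t, θ)) • deriv τ t
            = (β' (t, θ) * α (t, θ)) • deriv σ t + ((β (t, θ) * f₂) • τ t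
              - (β' (t, θ) * e₂) • σ t) from by
          linear_combination (norm := module) (-1 : ℝ) • hkey]
        refine Submodule.add_mem _ ?_ (Submodule.sub_mem _ ?_ ?_) <;>
          exact Submodule.smul_mem _ _ (Submodule.subset_span (by simp))
    · right
      have hEs := congrArg (fun x => form x (σ t)) hkey
      have hEw := congrArg (fun x => form x (τ t)) hkey
      have hEs' := congrArg (fun x => form x (deriv σ t)) hkey
      simp only [form_add_left, form_sub_left, form_smul_left] at hEs hEw hEs'
      rw [hs's, hσnull t ht, hws, hzs, hQdef, hGdef] at hEs
      rw [hw'w, hzw, hτnull t ht, hPdef, hGdef] at hEw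
      rw [hss', hzs', hws', hPdef, hRdef, hHdef] at hEs'
      have hrep : (β' (t, θ) * e₁ - β (t, θ) * f₁) • σ₀ (t, θ)
          = (β (t, θ) * α' (t, θ)) • v₀ := by
        rw [show (β' (t, θ) * e₁ - β (t, θ) * f₁) • σ₀ (t, θ)
            = (β' (t, θ) * α (t, θ)) • deriv σ t - (β (t, θ) * α' (t, θ)) • deriv τ t
              - (β' (t, θ) * e₂) • σ t + (β (t, θ) * f₂) • τ t from by
          linear_combination (norm := module) (-1 : ℝ) • hkey]
        rw [← hv₀def]
        match_scalars
        · field_simp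
          linear_combination G * hEs' - P * hEs
        · ring
        · field_simp
          linear_combination (G*H) * hEw - (P*G) * hEs' + (P*P) * hEs
        · field_simp
          have h := mul_left_cancel₀ hβ0 (show β (t, θ) * (f₂ * G) = β (t, θ) * (α' (t, θ) * Q) by linear_combination hEs)
          linear_combination h
      rw [← Submodule.smul_mem_iff _ hκ, hrep]
      exact Submodule.smul_mem _ _ (Submodule.mem_span_singleton_self v₀)
  by_cases hGoal : deriv σ t ∈ Submodule.span ℝ ({τ t, deriv τ t, σ t} : Set V6) ∧
      deriv τ t ∈ Submodule.span ℝ ({σ t, deriv σ t, τ t} : Set V6)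
  · constructor
    · apply le_antisymm
      · rw [Submodule.span_le]
        rintro x (rfl | rfl | rfl)
        · exact Submodule.subset_span (by simp)
        · exact hGoal.1
        · exact Submodule.subset_span (by simp)
      · rw [Submodule.span_le]
        rintro x (rfl | rfl | rfl)
        · exact Submodule.subset_span (by simp)
        · exact hGoal.2
        · exact Submodule.subset_span (by simp)
    · have hli : LinearIndependent ℝ ![σ t, deriv σ t, τ t] := by
        rw [Fintype.linearIndependent_iff]
        intro gc hgc
        rw [Fin.sum_univ_three] at hgc
        simp only [Matrix.cons_val_zero, Matrix.cons_val_one, Matrix.head_cons,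
          Matrix.cons_val_two, Matrix.tail_cons] at hgc
        have h2 : gc 2 = 0 := by
          have hx := congrArg (fun x => form x (σ t)) hgc
          simp only [form_add_left, form_smul_left, form_zero_left] at hx
          rw [hσnull t ht, hs's, hws] at hx
          have hx2 : gc 2 * form (σ t) (τ t) = 0 := by linarith
          exact (mul_eq_zero.mp hx2).resolve_right hg
        have h1 : gc 1 = 0 := by
          have hx := congrArg (fun x => form x (deriv σ t)) hgc
          simp only [form_add_left, form_smul_left, form_zero_left] at hx
          rw [hss', h2] at hx
          have hx2 : gc 1 * form (deriv σ t) (deriv σ t) = 0 := by linarith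
          exact (mul_eq_zero.mp hx2).resolve_right hh.ne'
        have h0 : gc 0 = 0 := by
          rw [h1, h2, zero_smul, zero_smul, add_zero, add_zero] at hgc
          rcases smul_eq_zero.mp hgc with h | h
          · exact h
          · exact absurd h hs0
        intro i; fin_cases i <;> assumption
      have hrange : ({σ t, deriv σ t, τ t} : Set V6) = Set.range ![σ t, deriv σ t, τ t] := by
        ext x
        constructor
        · rintro (rfl | rfl | rfl)
          · exact ⟨0, rfl⟩
          · exact ⟨1, rfl⟩
          · exact ⟨2, rfl⟩
        · rintro ⟨i, rfl⟩
          fin_cases i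
          · exact Set.mem_insert _ _
          · exact Set.mem_insert_of_mem _ (Set.mem_insert _ _)
          · exact Set.mem_insert_of_mem _ (Set.mem_insert_of_mem _ rfl)
      rw [hrange, finrank_span_eq_card hli]
      simp
  · exfalso
    have hall : ∀ θ ∈ J, σ₀ (t, θ) ∈ Submodule.span ℝ ({v₀} : Set V6) :=
      fun θ hθ => (claim θ hθ).resolve_left hGoal
    obtain ⟨θ₀, hθ₀⟩ := hJne
    have hp : (t, θ₀) ∈ I ×ˢ J := ⟨ht, hθ₀⟩
    have hσ₀d : DifferentiableAt ℝ σ₀ (t, θ₀) :=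
      (hσ₀smooth.contDiffAt ((hI.prod hJ).mem_nhds hp)).differentiableAt (by simp)
    have hder := hasDerivAt_slice_v hσ₀d
    have hpvmem : pv σ₀ (t, θ₀) ∈ Submodule.span ℝ ({v₀} : Set V6) :=
      deriv_mem_of_mem hJ hθ₀ (fun θ hθ => hall θ hθ) hder
    obtain ⟨d₀, hd₀⟩ := Submodule.mem_span_singleton.mp (hall θ₀ hθ₀)
    have hd₀0 : d₀ ≠ 0 := by
      intro h
      exact hσ₀0 (t, θ₀) hp (by rw [← hd₀, h, zero_smul])
    obtain ⟨r, hr⟩ := Submodule.mem_span_singleton.mp hpvmem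
    have hmem : pv σ₀ (t, θ₀) ∈ Submodule.span ℝ ({σ₀ (t, θ₀), σ t} : Set V6) := by
      have hv : pv σ₀ (t, θ₀) = (r * d₀⁻¹) • σ₀ (t, θ₀) := by
        rw [← hd₀, ← hr, smul_smul]
        congr 1
        field_simp
      rw [hv]
      exact Submodule.smul_mem _ _ (Submodule.subset_span (Set.mem_insert _ _))
    exact hσ₀reg (t, θ₀) hp hmem

/-- Theorem 4.2 of the paper (converse direction): if the envelopes `f = span{σ₀,σ}` and
`f̂ = span{σ₀,τ}` of two regular sphere curves `σ, τ = σ̂` form a Ribaucour pair with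
corresponding circular curvature directions (common second curvature direction
`X = ∂_t + c∂_θ`, with curvature sphere lifts `ασ + βσ₀` resp. `α̂τ + β̂σ₀` differing
from `σ₀`), then `s⁽¹⁾ ⊕ ŝ = ŝ⁽¹⁾ ⊕ s`, i.e. `span{σ,σ',τ} = span{τ,τ',σ}`, a
3-dimensional space. -/
theorem ribaucour_pair_of_sphere_curves_spans_coincide
    (I J : Set ℝ) (hI : IsOpen I) (hJ : IsOpen J)
    (hIconn : I.OrdConnected) (hJconn : J.OrdConnected)
    (hIne : I.Nonempty) (hJne : J.Nonempty)
    (σ τ : ℝ → V6)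
    (hσsmooth : ContDiffOn ℝ (⊤ : ℕ∞) σ I) (hτsmooth : ContDiffOn ℝ (⊤ : ℕ∞) τ I)
    (hσ0 : ∀ t ∈ I, σ t ≠ 0) (hτ0 : ∀ t ∈ I, τ t ≠ 0)
    (hσnull : ∀ t ∈ I, form (σ t) (σ t) = 0)
    (hτnull : ∀ t ∈ I, form (τ t) (τ t) = 0)
    (hστ : ∀ t ∈ I, form (σ t) (τ t) ≠ 0)
    (hσreg : ∀ t ∈ I, 0 < form (deriv σ t) (deriv σ t))
    (hτreg : ∀ t ∈ I, 0 < form (deriv τ t) (deriv τ t))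
    (σ₀ : ℝ × ℝ → V6)
    (hσ₀smooth : ContDiffOn ℝ (⊤ : ℕ∞) σ₀ (I ×ˢ J))
    (hσ₀0 : ∀ p ∈ I ×ˢ J, σ₀ p ≠ 0)
    (hσ₀null : ∀ p ∈ I ×ˢ J, form (σ₀ p) (σ₀ p) = 0)
    (hσ₀perp : ∀ p ∈ I ×ˢ J,
      form (σ₀ p) (σ p.1) = 0 ∧ form (σ₀ p) (τ p.1) = 0 ∧
      form (σ₀ p) (deriv σ p.1) = 0 ∧ form (σ₀ p) (deriv τ p.1) = 0)
    (hσ₀reg : ∀ p ∈ I ×ˢ J,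
      pv σ₀ p ∉ spanF σ₀ (fun q => σ q.1) p ∧
      pv σ₀ p ∉ spanF σ₀ (fun q => τ q.1) p)
    (c α β α' β' : ℝ × ℝ → ℝ)
    (hc : ContDiffOn ℝ (⊤ : ℕ∞) c (I ×ˢ J))
    (hα : ContDiffOn ℝ (⊤ : ℕ∞) α (I ×ˢ J)) (hβ : ContDiffOn ℝ (⊤ : ℕ∞) β (I ×ˢ J))
    (hα' : ContDiffOn ℝ (⊤ : ℕ∞) α' (I ×ˢ J)) (hβ' : ContDiffOn ℝ (⊤ : ℕ∞) β' (I ×ˢ J))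
    (hα0 : ∀ p ∈ I ×ˢ J, α p ≠ 0) (hα'0 : ∀ p ∈ I ×ˢ J, α' p ≠ 0)
    (hcurv : ∀ p ∈ I ×ˢ J,
      pu (fun q => α q • σ q.1 + β q • σ₀ q) p
          + c p • pv (fun q => α q • σ q.1 + β q • σ₀ q) p
        ∈ spanF σ₀ (fun q => σ q.1) p)
    (hcurv' : ∀ p ∈ I ×ˢ J,
      pu (fun q => α' q • τ q.1 + β' q • σ₀ q) p
          + c p • pv (fun q => α' q • τ q.1 + β' q • σ₀ q) p
        ∈ spanF σ₀ (fun q => τ q.1) p) :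
    ∀ t ∈ I,
      Submodule.span ℝ ({σ t, deriv σ t, τ t} : Set V6)
          = Submodule.span ℝ ({τ t, deriv τ t, σ t} : Set V6) ∧
      Module.finrank ℝ
          (Submodule.span ℝ ({σ t, deriv σ t, τ t} : Set V6)) = 3 := by
  intro t ht
  exact aux_main I J hI hJ hIne hJne σ τ hσsmooth hτsmooth hσ0 hτ0 hσnull hτnull hστ
    hσreg hτreg σ₀ hσ₀smooth hσ₀0 hσ₀perp (fun p hp => (hσ₀reg p hp).1)
    c α β α' β' hα hβ hα' hβ' hα0 hα'0 hcurv hcurv' t ht
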